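/- For every k ≥ 1, there exists a timed automaton T over finite timed words with exactly k clocks such that T is guidable with respect to the class T_k of timed automata over finite timed words with at most k clocks, but T is not history-deterministic. Hence history-determinism and guidability are distinct notions for T_k. -/

import Mathlib

open scoped NNReal

/-- Comparison operators in clock constraints. -/
inductive CmpOp where
  | lt | le | eq | ge | gt

def CmpOp.holds : CmpOp → ℝ≥0 → ℕ → Prop
  | .lt, x, n => x < (n : ℝ≥0)
  | .le, x, n => x ≤ (n : ℝ≥0)
  | .eq, x, n => x = (n : ℝ≥0)
  | .ge, x, n => (n : ℝ≥0) ≤ x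
  | .gt, x, n => (n : ℝ≥0) < x

/-- Guards: Boolean combinations of clock constraints `c ⋈ n`. -/
inductive Guard (Cl : Type) where
  | tt : Guard Cl
  | cmp (c : Cl) (op : CmpOp) (n : ℕ) : Guard Cl
  | and (g₁ g₂ : Guard Cl) : Guard Cl
  | or (g₁ g₂ : Guard Cl) : Guard Cl
  | not (g : Guard Cl) : Guard Cl

/-- Satisfaction of a guard by a clock valuation. -/
def Guard.sat {Cl : Type} : Guard Cl → (Cl → ℝ≥0) → Prop
  | .tt, _ => True
  | .cmp c op n, ν => op.holds (ν c) n
  | .and g₁ g₂, ν => g₁.sat ν ∧ g₂.sat ν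
  | .or g₁ g₂, ν => g₁.sat ν ∨ g₂.sat ν
  | .not g, ν => ¬ g.sat ν

/-- A timed automaton over alphabet `Al`: a transition `(q, g, σ, X, q') ∈ Δ` is guarded
by `g` and resets the clocks in `X`. -/
structure TimedAut (Al : Type) where
  Q : Type
  Cl : Type
  init : Q
  Δ : Set (Q × Guard Cl × Al × Set Cl × Q)
  F : Set Q

namespace TimedAut

variable {Al : Type}

def WF (M : TimedAut Al) : Prop := Finite M.Q ∧ Finite M.Cl ∧ M.Δ.Finite

/-- The initial configuration: initial state, all clocks at `0`. -/
def initCfg (M : TimedAut Al) : M.Q × (M.Cl → ℝ≥0) := (M.init, fun _ => 0)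

/-- One step of a timed automaton on the timed letter `(σ, d)` from a configuration. -/
def Step (M : TimedAut Al) (s : M.Q × (M.Cl → ℝ≥0)) (a : Al × ℝ≥0)
    (s' : M.Q × (M.Cl → ℝ≥0)) : Prop :=
  ∃ g X, (s.1, g, a.1, X, s'.1) ∈ M.Δ ∧ g.sat (fun c => s.2 c + a.2) ∧
    (∀ c ∈ X, s'.2 c = 0) ∧ (∀ c ∉ X, s'.2 c = s.2 c + a.2)

/-- A run of `M` on a finite timed word, from configuration `s` to configuration `s'`. -/
def RunFin (M : TimedAut Al) :
    (M.Q × (M.Cl → ℝ≥0)) → List (Al × ℝ≥0) → (M.Q × (M.Cl → ℝ≥0)) → Prop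
  | s, [], s' => s = s'
  | s, a :: w, s'' => ∃ s', M.Step s a s' ∧ RunFin M s' w s''

/-- The language of finite timed words of `M`: those on which some run from the initial
configuration ends in an accepting state. -/
def LangFin (M : TimedAut Al) : Set (List (Al × ℝ≥0)) :=
  { w | ∃ s, M.RunFin M.initCfg w s ∧ s.1 ∈ M.F }

/-- `M` is history-deterministic over finite timed words: Eve has a strategy in the letter
game (resolving the nondeterminism based only on the timed letters played so far, moving
along transitions of `M` from the initial configuration) such that at every finite stage
of every play, if the timed word played so far is in `L(M)`, then the state of Eve's
current configuration is accepting. -/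
def HDFin (M : TimedAut Al) : Prop :=
  ∃ st : List (Al × ℝ≥0) → Option (M.Q × (M.Cl → ℝ≥0)),
    st [] = some M.initCfg ∧
    (∀ w a s', st (w ++ [a]) = some s' → ∃ s, st w = some s ∧ M.Step s a s') ∧
    ∀ w ∈ M.LangFin, ∃ s, st w = some s ∧ s.1 ∈ M.F

/-- A history of Adam's moves (timed letters paired with Adam's resulting configurations)
is a valid play of Adam in `M'` from the configuration `s`. -/
def ValidFrom (M' : TimedAut Al) :
    (M'.Q × (M'.Cl → ℝ≥0)) → List ((Al × ℝ≥0) × (M'.Q × (M'.Cl → ℝ≥0))) → Prop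
  | _, [] => True
  | s, (a, s') :: h => M'.Step s a s' ∧ ValidFrom M' s' h

/-- The configuration reached at the end of a history starting at `s`. -/
def endCfg (M' : TimedAut Al) :
    (M'.Q × (M'.Cl → ℝ≥0)) → List ((Al × ℝ≥0) × (M'.Q × (M'.Cl → ℝ≥0))) →
      (M'.Q × (M'.Cl → ℝ≥0))
  | s, [] => s
  | _, (_, s') :: h => endCfg M' s' h

/-- `M` simulates `M'` over finite timed words: Eve has a strategy (reacting to Adam's
timed letters and transitions in `M'`, moving along transitions of `M` from the initial
configuration) such that at every finite stage of every play, Eve has a configuration,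
and if the state of Adam's current configuration is accepting in `M'`, then the state of
Eve's current configuration is accepting in `M`. -/
def SimFin (M M' : TimedAut Al) : Prop :=
  ∃ st : List ((Al × ℝ≥0) × (M'.Q × (M'.Cl → ℝ≥0))) → Option (M.Q × (M.Cl → ℝ≥0)),
    st [] = some M.initCfg ∧
    (∀ h x s', st (h ++ [x]) = some s' → ∃ s, st h = some s ∧ M.Step s x.1 s') ∧
    ∀ h, M'.ValidFrom M'.initCfg h →
      ∃ s, st h = some s ∧ ((M'.endCfg M'.initCfg h).1 ∈ M'.F → s.1 ∈ M.F)

end TimedAut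

/-!
The witness `oneLater k` resets any clocks on each letter, as long as the clocks it keeps
stay below `1`, and accepts when a clock reads exactly `1`: it accepts `w ++ [(σ, d)]` when
`v + d = 1` for some age `v < 1` of `w`, that is, a time elapsed since the start or since a
letter of `w`.

It is not history-deterministic: after `k` short letters there are `k + 1` ages, Eve's `k`
clocks remember at most `k` of them, and Adam completes a forgotten one to `1`.

It is guidable: against an automaton with at most `k` clocks and a smaller language, Eve
keeps exactly those ages that are fractional parts of Adam's clock values, and there are at
most `k` of these. When Adam accepts, one of his clocks is an integer, since otherwise he
would also accept after every nearby last delay, while `oneLater k` admits only finitely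
many; the fractional part of that clock is then the age Eve needs.
-/

open Function

theorem Int.fract_eq_of_fract_add {x v d : ℝ} (hv : 0 ≤ v) (hd : 0 ≤ d)
    (h : Int.fract (x + d) = v + d) : Int.fract x = v := by
  obtain ⟨-, hlt, z, hz⟩ := Int.fract_eq_iff.1 h
  exact Int.fract_eq_iff.2 ⟨hv, by linarith, z, by linarith⟩

namespace TimedWord

variable {Al : Type}

def duration (w : List (Al × ℝ≥0)) : ℝ≥0 := (w.map Prod.snd).sum

@[simp]
theorem duration_nil : duration ([] : List (Al × ℝ≥0)) = 0 := rfl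

@[simp]
theorem duration_cons (a : Al × ℝ≥0) (w : List (Al × ℝ≥0)) :
    duration (a :: w) = a.2 + duration w := by
  simp [duration]

@[simp]
theorem duration_append (u v : List (Al × ℝ≥0)) :
    duration (u ++ v) = duration u + duration v := by
  simp [duration]

/-- The times elapsed, at the end of `w`, since the start and since each letter of `w`:
the durations of the suffixes of `w`. -/
noncomputable def ages (w : List (Al × ℝ≥0)) : Finset ℝ≥0 := (w.tails.map duration).toFinset

theorem mem_ages {w : List (Al × ℝ≥0)} {v : ℝ≥0} :
    v ∈ ages w ↔ ∃ u, u <:+ w ∧ duration u = v := by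
  simp [ages]

theorem zero_mem_ages (w : List (Al × ℝ≥0)) : 0 ∈ ages w :=
  mem_ages.2 ⟨[], List.nil_suffix, rfl⟩

theorem le_duration_of_mem_ages {w : List (Al × ℝ≥0)} {v : ℝ≥0} (hv : v ∈ ages w) :
    v ≤ duration w := by
  obtain ⟨u, ⟨p, rfl⟩, rfl⟩ := mem_ages.1 hv
  simp

theorem mem_ages_concat {w : List (Al × ℝ≥0)} {a : Al × ℝ≥0} {v : ℝ≥0} :
    v ∈ ages (w ++ [a]) ↔ v = 0 ∨ ∃ v' ∈ ages w, v = v' + a.2 := by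
  simp only [mem_ages, List.suffix_concat_iff]
  constructor
  · rintro ⟨u, rfl | ⟨t, rfl, ht⟩, rfl⟩
    · exact Or.inl rfl
    · exact Or.inr ⟨_, ⟨t, ht, rfl⟩, by simp⟩
  · rintro (rfl | ⟨_, ⟨t, ht, rfl⟩, rfl⟩)
    · exact ⟨[], Or.inl rfl, rfl⟩
    · exact ⟨t ++ [a], Or.inr ⟨t, rfl, ht⟩, by simp⟩

theorem duration_replicate (n : ℕ) (a : Al × ℝ≥0) :
    duration (List.replicate n a) = n * a.2 := by
  simp [duration, List.sum_replicate]

theorem le_card_ages_replicate (n : ℕ) (σ : Al) {δ : ℝ≥0} (hδ : δ ≠ 0) :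
    n + 1 ≤ (ages (List.replicate n (σ, δ))).card := by
  classical
  have hinj : Injective fun j : ℕ => (j : ℝ≥0) * δ :=
    (mul_left_injective₀ hδ).comp Nat.cast_injective
  calc n + 1 = ((Finset.range (n + 1)).image fun j : ℕ => (j : ℝ≥0) * δ).card := by
        rw [Finset.card_image_of_injective _ hinj, Finset.card_range]
    _ ≤ _ := by
        refine Finset.card_le_card fun v hv => ?_
        obtain ⟨j, hj, rfl⟩ := Finset.mem_image.1 hv
        refine mem_ages.2 ⟨List.replicate j (σ, δ), ?_, duration_replicate j _⟩
        rw [← Nat.sub_add_cancel (Nat.lt_succ_iff.1 (Finset.mem_range.1 hj)),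
          List.replicate_add]
        exact List.suffix_append _ _

end TimedWord

open TimedWord

namespace Guard

variable {Cl : Type}

def all (l : List (Guard Cl)) : Guard Cl := l.foldr Guard.and Guard.tt

@[simp]
theorem sat_all (l : List (Guard Cl)) (ν : Cl → ℝ≥0) :
    (all l).sat ν ↔ ∀ g ∈ l, g.sat ν := by
  induction l with
  | nil => simp [all, Guard.sat]
  | cons g l ih => simp [all, Guard.sat, ← ih]

theorem exists_sat_add_iff_of_ne_natCast (g : Guard Cl) {ν : Cl → ℝ≥0}
    (hν : ∀ c (n : ℕ), ν c ≠ n) :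
    ∃ ε > 0, ∀ t < ε, (g.sat fun c => ν c + t) ↔ g.sat ν := by
  induction g with
  | tt => exact ⟨1, one_pos, fun _ _ => Iff.rfl⟩
  | cmp c op n =>
    rcases (hν c n).lt_or_gt with hlt | hgt
    · refine ⟨n - ν c, tsub_pos_of_lt hlt, fun t ht => ?_⟩
      have : ν c + t < n := lt_tsub_iff_left.1 ht
      cases op <;> simp only [Guard.sat, CmpOp.holds] <;> constructor <;> intro <;> order
    · refine ⟨1, one_pos, fun t _ => ?_⟩
      have : (n : ℝ≥0) < ν c + t := hgt.trans_le le_self_add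
      cases op <;> simp only [Guard.sat, CmpOp.holds] <;> constructor <;> intro <;> order
  | and g₁ g₂ ih₁ ih₂ =>
    obtain ⟨ε₁, hε₁, h₁⟩ := ih₁
    obtain ⟨ε₂, hε₂, h₂⟩ := ih₂
    exact ⟨min ε₁ ε₂, lt_min hε₁ hε₂, fun t ht =>
      and_congr (h₁ t (ht.trans_le (min_le_left _ _))) (h₂ t (ht.trans_le (min_le_right _ _)))⟩
  | or g₁ g₂ ih₁ ih₂ =>
    obtain ⟨ε₁, hε₁, h₁⟩ := ih₁
    obtain ⟨ε₂, hε₂, h₂⟩ := ih₂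
    exact ⟨min ε₁ ε₂, lt_min hε₁ hε₂, fun t ht =>
      or_congr (h₁ t (ht.trans_le (min_le_left _ _))) (h₂ t (ht.trans_le (min_le_right _ _)))⟩
  | not g ih =>
    obtain ⟨ε, hε, h⟩ := ih
    exact ⟨ε, hε, fun t ht => not_congr (h t ht)⟩

end Guard

namespace TimedAut

variable {Al : Type} {M : TimedAut Al}

theorem runFin_append {s s'' : M.Q × (M.Cl → ℝ≥0)} {u v : List (Al × ℝ≥0)} :
    M.RunFin s (u ++ v) s'' ↔ ∃ s', M.RunFin s u s' ∧ M.RunFin s' v s'' := by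
  induction u generalizing s with
  | nil => simp [RunFin]
  | cons a u ih => simp only [List.cons_append, RunFin, ih]; grind

theorem runFin_concat {s s' : M.Q × (M.Cl → ℝ≥0)} {w : List (Al × ℝ≥0)} {a : Al × ℝ≥0} :
    M.RunFin s (w ++ [a]) s' ↔ ∃ s₁, M.RunFin s w s₁ ∧ M.Step s₁ a s' := by
  simp [runFin_append, RunFin]

theorem Step.exists_add_eq_natCast {s s' : M.Q × (M.Cl → ℝ≥0)} {a : Al × ℝ≥0}
    (h : M.Step s a s') (hfin : {d | ∃ ν, M.Step s (a.1, d) (s'.1, ν)}.Finite) :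
    ∃ (c : M.Cl) (n : ℕ), s.2 c + a.2 = n := by
  classical
  by_contra! hint
  -- then the guard of the step holds for every delay slightly above `a.2`
  obtain ⟨g, X, hΔ, hg, -, -⟩ := h
  obtain ⟨ε, hε, hstable⟩ := g.exists_sat_add_iff_of_ne_natCast hint
  refine ((Set.Ico_infinite hε).image (add_right_injective a.2).injOn) (hfin.subset ?_)
  rintro _ ⟨t, ht, rfl⟩
  refine ⟨fun c => if c ∈ X then 0 else s.2 c + (a.2 + t), g, X, hΔ, ?_, ?_, ?_⟩
  · simpa only [add_assoc] using (hstable t ht.2).2 hg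
  · intro c hc; simp [hc]
  · intro c hc; simp [hc]

theorem runFin_of_validFrom {s : M.Q × (M.Cl → ℝ≥0)} {h : List ((Al × ℝ≥0) × (M.Q × (M.Cl → ℝ≥0)))}
    (hv : M.ValidFrom s h) : M.RunFin s (h.map Prod.fst) (M.endCfg s h) := by
  induction h generalizing s with
  | nil => rfl
  | cons x h ih => exact ⟨x.2, hv.1, ih hv.2⟩

theorem validFrom_concat {s : M.Q × (M.Cl → ℝ≥0)} {h : List ((Al × ℝ≥0) × (M.Q × (M.Cl → ℝ≥0)))}
    {x : (Al × ℝ≥0) × (M.Q × (M.Cl → ℝ≥0))} :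
    M.ValidFrom s (h ++ [x]) ↔ M.ValidFrom s h ∧ M.Step (M.endCfg s h) x.1 x.2 := by
  induction h generalizing s with
  | nil => simp [ValidFrom, endCfg]
  | cons y h ih => simp [ValidFrom, endCfg, ih, and_assoc]

theorem endCfg_concat (s : M.Q × (M.Cl → ℝ≥0)) (h : List ((Al × ℝ≥0) × (M.Q × (M.Cl → ℝ≥0))))
    (x : (Al × ℝ≥0) × (M.Q × (M.Cl → ℝ≥0))) : M.endCfg s (h ++ [x]) = x.2 := by
  induction h generalizing s with
  | nil => rfl
  | cons y h ih => exact ih _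

theorem simFin_of_step {M' : TimedAut Al}
    (f : M.Q × (M.Cl → ℝ≥0) → (Al × ℝ≥0) × (M'.Q × (M'.Cl → ℝ≥0)) → M.Q × (M.Cl → ℝ≥0))
    (hf : ∀ s x, M.Step s x.1 (f s x))
    (hacc : ∀ h, M'.ValidFrom M'.initCfg h → (M'.endCfg M'.initCfg h).1 ∈ M'.F →
      (h.foldl f M.initCfg).1 ∈ M.F) :
    M.SimFin M' := by
  refine ⟨fun h => some (h.foldl f M.initCfg), rfl, fun h x s' hs' => ?_,
    fun h hv => ⟨_, rfl, hacc h hv⟩⟩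
  simp only [List.foldl_concat, Option.some_inj] at hs'
  exact ⟨_, rfl, hs' ▸ hf _ x⟩

end TimedAut

open TimedAut

section OneLater

variable {k : ℕ}

def belowOne (X : Finset (Fin k)) : Guard (Fin k) :=
  Guard.all (((List.finRange k).filter (· ∉ X)).map fun c => .cmp c .lt 1)

theorem sat_belowOne (X : Finset (Fin k)) (ν : Fin k → ℝ≥0) :
    (belowOne X).sat ν ↔ ∀ c ∉ X, ν c < 1 := by
  simp [belowOne, Guard.sat, CmpOp.holds]

def oneLaterGuard (X : Finset (Fin k)) : Option (Fin k) → Guard (Fin k)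
  | none => belowOne X
  | some c => .and (.cmp c .eq 1) (belowOne X)

/-- The transition indexed by `(q, X, o)` leaves `q` and resets `X`; for `o = some c` it
also requires clock `c` to read `1`, and it enters the accepting state `true`. -/
abbrev oneLater (k : ℕ) : TimedAut Unit where
  Q := Bool
  Cl := Fin k
  init := false
  Δ := Set.range fun t : Bool × Finset (Fin k) × Option (Fin k) =>
    (t.1, oneLaterGuard t.2.1 t.2.2, (), ↑t.2.1, t.2.2.isSome)
  F := {true}

theorem oneLater_wf (k : ℕ) : (oneLater k).WF :=
  ⟨inferInstanceAs (Finite Bool), inferInstanceAs (Finite (Fin k)), Set.finite_range _⟩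

theorem oneLater_step_iff {s s' : Bool × (Fin k → ℝ≥0)} {a : Unit × ℝ≥0} :
    (oneLater k).Step s a s' ↔
      (∀ c, s'.2 c = 0 ∨ (s'.2 c = s.2 c + a.2 ∧ s.2 c + a.2 < 1)) ∧
      (s'.1 = true → ∃ c, s.2 c + a.2 = 1) := by
  classical
  constructor
  · rintro ⟨g, X, ⟨⟨q, Y, o⟩, heq⟩, hg, hreset, hkeep⟩
    simp only [Prod.mk.injEq] at heq
    obtain ⟨-, rfl, -, rfl, hq⟩ := heq
    have hbelow : ∀ c ∉ Y, s.2 c + a.2 < 1 := by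
      cases o <;> simp only [oneLaterGuard, Guard.sat, sat_belowOne] at hg
      exacts [hg, hg.2]
    refine ⟨fun c => ?_, fun htrue => ?_⟩
    · by_cases hc : c ∈ Y
      · exact Or.inl (hreset c hc)
      · exact Or.inr ⟨hkeep c hc, hbelow c hc⟩
    · cases o with
      | none => simp [← hq] at htrue
      | some c => exact ⟨c, by simpa [oneLaterGuard, Guard.sat, CmpOp.holds] using hg.1⟩
  · rintro ⟨hclocks, hacc⟩
    let Y := Finset.univ.filter fun c => s'.2 c = 0
    have hY : ∀ c, c ∈ Y ↔ s'.2 c = 0 := by simp [Y]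
    have hkept : ∀ c ∉ Y, s'.2 c = s.2 c + a.2 ∧ s.2 c + a.2 < 1 :=
      fun c hc => (hclocks c).resolve_left ((hY c).not.1 hc)
    have hbelow : (belowOne Y).sat fun c => s.2 c + a.2 :=
      (sat_belowOne _ _).2 fun c hc => (hkept c hc).2
    have hreset : ∀ c ∈ (Y : Set (Fin k)), s'.2 c = 0 := fun c hc => (hY c).1 hc
    have hkeep : ∀ c ∉ (Y : Set (Fin k)), s'.2 c = s.2 c + a.2 := fun c hc => (hkept c hc).1
    obtain ⟨q', ν'⟩ := s'
    cases q' with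
    | false => exact ⟨_, _, ⟨(s.1, Y, none), rfl⟩, hbelow, hreset, hkeep⟩
    | true =>
      obtain ⟨c, hc⟩ := hacc rfl
      refine ⟨_, _, ⟨(s.1, Y, some c), rfl⟩, ⟨?_, hbelow⟩, hreset, hkeep⟩
      simpa [Guard.sat, CmpOp.holds] using hc

theorem oneLater_step_false {s : Bool × (Fin k → ℝ≥0)} {a : Unit × ℝ≥0} {ν : Fin k → ℝ≥0}
    (h : ∀ c, ν c = 0 ∨ (ν c = s.2 c + a.2 ∧ s.2 c + a.2 < 1)) :
    (oneLater k).Step s a (false, ν) :=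
  oneLater_step_iff.2 ⟨h, fun h => (Bool.false_ne_true h).elim⟩

theorem oneLater_runFin_clock {w : List (Unit × ℝ≥0)} {s : Bool × (Fin k → ℝ≥0)}
    (h : (oneLater k).RunFin (oneLater k).initCfg w s) (c : Fin k) :
    s.2 c < 1 ∧ s.2 c ∈ ages w := by
  induction w using List.reverseRecOn generalizing s with
  | nil =>
    obtain rfl : (oneLater k).initCfg = s := h
    exact ⟨zero_lt_one, zero_mem_ages _⟩
  | append_singleton w a ih =>
    obtain ⟨s₁, hrun, hstep⟩ := runFin_concat.1 h
    rcases (oneLater_step_iff.1 hstep).1 c with h0 | ⟨hc, hlt⟩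
    · rw [h0]
      exact ⟨zero_lt_one, zero_mem_ages _⟩
    · rw [hc]
      exact ⟨hlt, mem_ages_concat.2 (Or.inr ⟨_, (ih hrun).2, rfl⟩)⟩

theorem exists_age_of_append_mem_langFin {w : List (Unit × ℝ≥0)} {a : Unit × ℝ≥0}
    (h : w ++ [a] ∈ (oneLater k).LangFin) : ∃ v ∈ ages w, v < 1 ∧ v + a.2 = 1 := by
  obtain ⟨s, hrun, hF⟩ := h
  obtain ⟨s₁, hrun₁, hstep⟩ := runFin_concat.1 hrun
  obtain ⟨c, hc⟩ := (oneLater_step_iff.1 hstep).2 hF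
  obtain ⟨hlt, hage⟩ := oneLater_runFin_clock hrun₁ c
  exact ⟨_, hage, hlt, hc⟩

theorem nil_notMem_langFin_oneLater : [] ∉ (oneLater k).LangFin := by
  rintro ⟨s, rfl, hF⟩
  simp [initCfg] at hF

theorem finite_setOf_append_mem_langFin (w : List (Unit × ℝ≥0)) (σ : Unit) :
    {d | w ++ [(σ, d)] ∈ (oneLater k).LangFin}.Finite := by
  refine ((ages w).finite_toSet.image (1 - ·)).subset fun d hd => ?_
  obtain ⟨v, hv, -, hvd⟩ := exists_age_of_append_mem_langFin hd
  exact ⟨v, hv, tsub_eq_of_eq_add_rev hvd.symm⟩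

theorem oneLater_runFin_reset (u : List (Unit × ℝ≥0)) :
    (oneLater k).RunFin (false, fun _ => 0) u (false, fun _ => 0) := by
  induction u with
  | nil => rfl
  | cons a u ih => exact ⟨_, oneLater_step_false fun _ => Or.inl rfl, ih⟩

theorem oneLater_runFin_keep (u : List (Unit × ℝ≥0)) {t : ℝ≥0} (h : t + duration u < 1) :
    (oneLater k).RunFin (false, fun _ => t) u (false, fun _ => t + duration u) := by
  induction u generalizing t with
  | nil => simp [RunFin]
  | cons a u ih =>
    rw [duration_cons, ← add_assoc] at h ⊢
    have hstep : (oneLater k).Step (false, fun _ => t) a (false, fun _ => t + a.2) :=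
      oneLater_step_false fun _ => Or.inr ⟨rfl, le_self_add.trans_lt h⟩
    exact ⟨_, hstep, ih h⟩

theorem append_mem_langFin_oneLater (hk : 1 ≤ k) {w : List (Unit × ℝ≥0)} {v d : ℝ≥0}
    (hv : v ∈ ages w) (hv₁ : v < 1) (hvd : v + d = 1) :
    w ++ [((), d)] ∈ (oneLater k).LangFin := by
  obtain ⟨u, ⟨p, rfl⟩, rfl⟩ := mem_ages.1 hv
  have hkeep := oneLater_runFin_keep (k := k) u (t := 0) (by rwa [zero_add])
  rw [zero_add] at hkeep
  have hfinal : (oneLater k).Step (false, fun _ => duration u) ((), d) (true, fun _ => 0) :=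
    oneLater_step_iff.2 ⟨fun _ => Or.inl rfl, fun _ => ⟨⟨0, hk⟩, hvd⟩⟩
  exact ⟨_, runFin_concat.2 ⟨_, runFin_append.2 ⟨_, oneLater_runFin_reset p, hkeep⟩, hfinal⟩,
    rfl⟩

theorem oneLater_not_hdFin (hk : 1 ≤ k) : ¬ (oneLater k).HDFin := by
  rintro ⟨st, -, hstep, hacc⟩
  have accepts : ∀ {w a}, w ++ [a] ∈ (oneLater k).LangFin →
      ∃ s s', st w = some s ∧ (oneLater k).Step s a s' ∧ s'.1 = true := by
    intro w a hw
    obtain ⟨s', hs', hF⟩ := hacc _ hw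
    obtain ⟨s, hs, hstep'⟩ := hstep w a s' hs'
    exact ⟨s, s', hs, hstep', hF⟩
  set δ : ℝ≥0 := (k + 1 : ℝ≥0)⁻¹
  set w := List.replicate k ((), δ)
  have hw : duration w < 1 := by
    rw [duration_replicate, ← div_eq_mul_inv, div_lt_one (by positivity)]
    exact lt_add_one _
  obtain ⟨s, -, hs, -, -⟩ := accepts (append_mem_langFin_oneLater hk (zero_mem_ages w)
    zero_lt_one (zero_add 1))
  obtain ⟨v, hv, hmiss⟩ : ∃ v ∈ ages w, v ∉ Finset.univ.image s.2 := by
    refine Finset.exists_mem_notMem_of_card_lt_card ?_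
    calc (Finset.univ.image s.2).card ≤ k := Finset.card_image_le.trans (by simp)
      _ < k + 1 := lt_add_one k
      _ ≤ (ages w).card := le_card_ages_replicate k () (by positivity)
  have hv₁ : v < 1 := (le_duration_of_mem_ages hv).trans_lt hw
  obtain ⟨s₁, s', hs₁, hstep', hF⟩ := accepts
    (append_mem_langFin_oneLater hk hv hv₁ (add_tsub_cancel_of_le hv₁.le))
  obtain rfl : s₁ = s := Option.some_inj.1 (hs₁.symm.trans hs)
  obtain ⟨c, hc⟩ := (oneLater_step_iff.1 hstep').2 hF
  refine hmiss (Finset.mem_image.2 ⟨c, Finset.mem_univ c, ?_⟩)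
  exact add_right_cancel (hc.trans (add_tsub_cancel_of_le hv₁.le).symm)

end OneLater

section Simulation

variable {k : ℕ}

def fracts {Cl : Type} (ν : Cl → ℝ≥0) : Set ℝ := Set.range fun c => Int.fract (ν c : ℝ)

theorem ncard_fracts_le {Cl : Type} [Finite Cl] (ν : Cl → ℝ≥0) :
    (fracts ν).ncard ≤ Nat.card Cl := by
  rw [fracts, ← Set.image_univ, ← Set.ncard_univ]
  exact Set.ncard_image_le

theorem lt_one_of_mem_fracts {Cl : Type} {ν : Cl → ℝ≥0} {x : ℝ} (hx : x ∈ fracts ν) :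
    x < 1 := by
  obtain ⟨c, rfl⟩ := hx
  exact Int.fract_lt_one _

def Keeps (V : Set ℝ) (u : Fin k → ℝ≥0) (c : Fin k) : Prop :=
  (u c : ℝ) ∈ V ∧ ∀ c' < c, u c' ≠ u c

theorem Keeps.injective {V : Set ℝ} {u : Fin k → ℝ≥0} {c₁ c₂ : Fin k} (h₁ : Keeps V u c₁)
    (h₂ : Keeps V u c₂) (h : u c₁ = u c₂) : c₁ = c₂ := by
  rcases lt_trichotomy c₁ c₂ with hlt | heq | hgt
  exacts [(h₂.2 c₁ hlt h).elim, heq, (h₁.2 c₂ hgt h.symm).elim]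

open Classical in
noncomputable def eveMove (V : Set ℝ) (s : Bool × (Fin k → ℝ≥0)) (d : ℝ≥0) :
    Bool × (Fin k → ℝ≥0) :=
  (decide (∃ c, s.2 c + d = 1),
    fun c => if Keeps V (s.2 · + d) c then s.2 c + d else 0)

theorem oneLater_step_eveMove {V : Set ℝ} (hV : ∀ x ∈ V, x < 1) (s : Bool × (Fin k → ℝ≥0))
    (a : Unit × ℝ≥0) : (oneLater k).Step s a (eveMove V s a.2) := by
  classical
  refine oneLater_step_iff.2 ⟨fun c => ?_, fun h => by simpa [eveMove] using h⟩
  by_cases hc : Keeps V (s.2 · + a.2) c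
  · refine Or.inr ⟨if_pos hc, ?_⟩
    exact_mod_cast hV _ hc.1
  · exact Or.inl (if_neg hc)

theorem eveMove_fst {V : Set ℝ} {s : Bool × (Fin k → ℝ≥0)} {d : ℝ≥0} {c : Fin k}
    (hc : s.2 c + d = 1) : (eveMove V s d).1 = true := by
  simpa [eveMove] using ⟨c, hc⟩

theorem mem_range_eveMove {V : Set ℝ} {s : Bool × (Fin k → ℝ≥0)} {d : ℝ≥0} {c : Fin k}
    (hc : ((s.2 c + d : ℝ≥0) : ℝ) ∈ V) : s.2 c + d ∈ Set.range (eveMove V s d).2 := by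
  classical
  obtain ⟨c₀, hc₀, hmin⟩ := wellFounded_lt.has_min {c' | s.2 c' + d = s.2 c + d} ⟨c, rfl⟩
  have hc₀' : s.2 c₀ + d = s.2 c + d := hc₀
  have hkeeps : Keeps V (s.2 · + d) c₀ :=
    ⟨by simpa only [hc₀'] using hc, fun c' hc' heq => hmin c' (heq.trans hc₀') hc'⟩
  exact ⟨c₀, (if_pos hkeeps).trans hc₀'⟩

/-- Pigeonhole: otherwise Eve's `k` clocks would hold distinct nonzero elements of `V`. -/
theorem zero_mem_range_eveMove {V : Set ℝ} (hV : V.Finite) (hcard : V.ncard ≤ k)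
    (h₀ : 0 ∈ V) (s : Bool × (Fin k → ℝ≥0)) (d : ℝ≥0) : 0 ∈ Set.range (eveMove V s d).2 := by
  classical
  by_contra hne
  have hkeeps : ∀ c, Keeps V (s.2 · + d) c ∧ s.2 c + d ≠ 0 := by
    intro c
    have hc : (eveMove V s d).2 c ≠ 0 := fun h => hne ⟨c, h⟩
    by_cases hk : Keeps V (s.2 · + d) c
    · exact ⟨hk, by simpa [eveMove, hk] using hc⟩
    · exact (hc (if_neg hk)).elim
  have hinj : Set.InjOn (fun c => ((s.2 c + d : ℝ≥0) : ℝ)) Set.univ := by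
    intro c₁ _ c₂ _ h
    exact (hkeeps c₁).1.injective (hkeeps c₂).1 (NNReal.coe_injective h)
  have hmaps : ∀ c ∈ Set.univ, ((s.2 c + d : ℝ≥0) : ℝ) ∈ V \ {0} := fun c _ =>
    ⟨(hkeeps c).1.1, fun h => (hkeeps c).2 (NNReal.coe_eq_zero.1 h)⟩
  have hle := Set.ncard_le_ncard_of_injOn _ hmaps hinj hV.sdiff
  rw [Set.ncard_univ, Nat.card_fin, Set.ncard_sdiff_singleton_of_mem h₀] at hle
  have hpos := (Set.ncard_pos hV).2 ⟨0, h₀⟩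
  omega

def Tracks {Al Cl : Type} (w : List (Al × ℝ≥0)) (ν' : Cl → ℝ≥0) (ν : Fin k → ℝ≥0) : Prop :=
  ∀ v ∈ ages w, (v : ℝ) ∈ fracts ν' → v ∈ Set.range ν

theorem Tracks.concat {Al Cl : Type} [Finite Cl] (hcard : Nat.card Cl ≤ k)
    {w : List (Al × ℝ≥0)} {a : Al × ℝ≥0} {ν' ν'' : Cl → ℝ≥0} {s : Bool × (Fin k → ℝ≥0)}
    (h : Tracks w ν' s.2) (hstep : ∀ c, ν'' c = 0 ∨ ν'' c = ν' c + a.2) :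
    Tracks (w ++ [a]) ν'' (eveMove (fracts ν'') s a.2).2 := by
  have hzero : (0 : ℝ) ∈ fracts ν'' → (0 : ℝ≥0) ∈ Set.range (eveMove (fracts ν'') s a.2).2 :=
    fun h₀ => zero_mem_range_eveMove (Set.finite_range _) ((ncard_fracts_le ν'').trans hcard)
      h₀ s a.2
  intro v hv hfr
  rcases mem_ages_concat.1 hv with rfl | ⟨v₀, hv₀, rfl⟩
  · exact hzero (by exact_mod_cast hfr)
  obtain ⟨c', hc' : Int.fract (ν'' c' : ℝ) = ((v₀ + a.2 : ℝ≥0) : ℝ)⟩ := hfr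
  rcases hstep c' with h₀ | hkeep
  · rw [h₀, NNReal.coe_zero, Int.fract_zero] at hc'
    rw [NNReal.coe_eq_zero.1 hc'.symm]
    exact hzero ⟨c', by simp [h₀]⟩
  · rw [hkeep, NNReal.coe_add, NNReal.coe_add] at hc'
    obtain ⟨c, hc⟩ := h v₀ hv₀ ⟨c', Int.fract_eq_of_fract_add v₀.coe_nonneg a.2.coe_nonneg hc'⟩
    rw [← hc] at hc' ⊢
    refine mem_range_eveMove ⟨c', show Int.fract (ν'' c' : ℝ) = _ from ?_⟩
    rw [hkeep]
    push_cast
    exact hc'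

variable (M' : TimedAut Unit)

noncomputable def eveStep (s : Bool × (Fin k → ℝ≥0))
    (x : (Unit × ℝ≥0) × (M'.Q × (M'.Cl → ℝ≥0))) : Bool × (Fin k → ℝ≥0) :=
  eveMove (fracts x.2.2) s x.1.2

variable {M'} [Finite M'.Cl]

theorem tracks_foldl_eveStep (hk : 1 ≤ k) (hcard : Nat.card M'.Cl ≤ k)
    {h : List ((Unit × ℝ≥0) × (M'.Q × (M'.Cl → ℝ≥0)))} (hv : M'.ValidFrom M'.initCfg h) :
    Tracks (h.map Prod.fst) (M'.endCfg M'.initCfg h).2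
      (h.foldl (eveStep M') (oneLater k).initCfg).2 := by
  induction h using List.reverseRecOn with
  | nil =>
    intro v hv _
    obtain ⟨u, hu, rfl⟩ := mem_ages.1 hv
    rw [List.suffix_nil.1 hu]
    exact ⟨⟨0, hk⟩, rfl⟩
  | append_singleton h x ih =>
    obtain ⟨hv', g, X, -, -, hreset, hkeep⟩ := validFrom_concat.1 hv
    rw [List.map_append, List.foldl_concat, endCfg_concat]
    refine (ih hv').concat hcard fun c => ?_
    by_cases hc : c ∈ X
    exacts [Or.inl (hreset c hc), Or.inr (hkeep c hc)]

theorem eveStep_accepts (hk : 1 ≤ k) (hcard : Nat.card M'.Cl ≤ k)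
    (hsub : M'.LangFin ⊆ (oneLater k).LangFin)
    {h : List ((Unit × ℝ≥0) × (M'.Q × (M'.Cl → ℝ≥0)))} (hv : M'.ValidFrom M'.initCfg h)
    (hF : (M'.endCfg M'.initCfg h).1 ∈ M'.F) :
    (h.foldl (eveStep M') (oneLater k).initCfg).1 ∈ (oneLater k).F := by
  rcases List.eq_nil_or_concat' h with rfl | ⟨h, x, rfl⟩
  · exact (nil_notMem_langFin_oneLater (hsub ⟨_, rfl, hF⟩)).elim
  obtain ⟨hv', hstep⟩ := validFrom_concat.1 hv
  rw [endCfg_concat] at hF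
  set α := M'.endCfg M'.initCfg h
  have hrun := runFin_of_validFrom hv'
  obtain ⟨v, hage, hv₁, hvd⟩ := exists_age_of_append_mem_langFin
    (hsub ⟨_, runFin_concat.2 ⟨_, hrun, hstep⟩, hF⟩)
  obtain ⟨c', n, hn⟩ := hstep.exists_add_eq_natCast <|
    (finite_setOf_append_mem_langFin (k := k) (h.map Prod.fst) x.1.1).subset
      fun d ⟨ν, hstep'⟩ => hsub ⟨_, runFin_concat.2 ⟨_, hrun, hstep'⟩, hF⟩
  have hfr : (v : ℝ) ∈ fracts α.2 := by
    refine ⟨c', Int.fract_eq_iff.2 ⟨v.coe_nonneg, by exact_mod_cast hv₁, n - 1, ?_⟩⟩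
    have hn' : (α.2 c' : ℝ) + x.1.2 = n := by exact_mod_cast hn
    have hvd' : (v : ℝ) + x.1.2 = 1 := by exact_mod_cast hvd
    push_cast
    linarith
  obtain ⟨c, hc⟩ := tracks_foldl_eveStep hk hcard hv' v hage hfr
  rw [List.foldl_concat]
  exact eveMove_fst (hc ▸ hvd)

theorem oneLater_simFin (hk : 1 ≤ k) (hcard : Nat.card M'.Cl ≤ k)
    (hsub : M'.LangFin ⊆ (oneLater k).LangFin) : (oneLater k).SimFin M' :=
  simFin_of_step (eveStep M')
    (fun s x => oneLater_step_eveMove (fun _ => lt_one_of_mem_fracts) s x.1)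
    fun _ hv hF => eveStep_accepts hk hcard hsub hv hF

end Simulation

/-- For every `k ≥ 1` there is a timed automaton `M` over finite timed
words with exactly `k` clocks that is guidable with respect to the class `T_k` of timed
automata over finite timed words with at most `k` clocks (over its alphabet), but that is
not history-deterministic; hence history-determinism and guidability are distinct
notions for `T_k`. -/
theorem timed_bounded_clocks_guidable_not_hd (k : ℕ) (hk : 1 ≤ k) :
    ∃ (Al : Type) (_ : Finite Al) (M : TimedAut Al),
      M.WF ∧ Nat.card M.Cl = k ∧
      (∀ M' : TimedAut Al, M'.WF → Nat.card M'.Cl ≤ k →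
        M'.LangFin ⊆ M.LangFin → M.SimFin M') ∧
      ¬ M.HDFin :=
  ⟨Unit, inferInstance, oneLater k, oneLater_wf k, Nat.card_fin k,
    fun _ hM' hcard hsub => have := hM'.2.1; oneLater_simFin hk hcard hsub,
    oneLater_not_hdFin hk⟩
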